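/- Let G=(V,E) be a finite simple bipartite graph and let 1 ≤ k ≤ |V|/2. Then λ_1(L(F_k(G))) ≤ |E| + 2k − 1. -/

import Mathlib

open Finset
open scoped symmDiff

/-- The `k`-th token graph of `G`: its vertices are the `k`-element subsets of the
vertex set of `G`, two of them being adjacent whenever their symmetric difference
is an edge of `G`. -/
def tokenGraph {V : Type*} [DecidableEq V] (G : SimpleGraph V) (k : ℕ) :
    SimpleGraph {s : Finset V // s.card = k} where
  Adj σ τ := ∃ u v, G.Adj u v ∧ σ.val ∆ τ.val = {u, v}
  symm := by
    constructor
    rintro σ τ ⟨u, v, huv, hd⟩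
    exact ⟨u, v, huv, by rwa [symmDiff_comm]⟩
  loopless := by
    constructor
    rintro σ ⟨u, v, huv, hd⟩
    rw [symmDiff_self] at hd
    have hu : u ∈ ({u, v} : Finset V) := by simp
    rw [← hd] at hu
    simp at hu

instance {V : Type*} [Fintype V] [DecidableEq V] (G : SimpleGraph V) [DecidableRel G.Adj]
    (k : ℕ) : DecidableRel (tokenGraph G k).Adj := fun σ τ =>
  inferInstanceAs (Decidable (∃ u v, G.Adj u v ∧ σ.val ∆ τ.val = {u, v}))

/-- The largest eigenvalue of a (symmetric) real matrix, expressed as the supremum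
of the set of its real eigenvalues. -/
noncomputable def maxEigenvalue {n : Type*} [Fintype n] (M : Matrix n n ℝ) : ℝ :=
  sSup {μ : ℝ | ∃ x : n → ℝ, x ≠ 0 ∧ M.mulVec x = μ • x}

/-!
For an edge `ab` of `G` let `Q_ab(x) = ∑ (x σ - x σ')²`, summed over the `k`-sets `σ` with
`a ∈ σ`, `b ∉ σ`, where `σ' = σ - a + b`. The Laplacian quadratic form of `F_k(G)` is
`∑_{ab ∈ E(G)} Q_ab(x)`, so it suffices to show `∑_{e ∈ E} Q_e(x) ≤ (|E| + 2k - 1) ‖x‖²` for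
every set `E` of edges of the bipartite graph, by induction on `|E|`.

If `E` contains a matching `M` of size `2k`, then `∑_{e ∈ M} Q_e(x) ≤ 2k ‖x‖²`, because a
`k`-set meets at most `k` edges of a matching; remove `M` and use induction. Otherwise, by
König's theorem `E` has a vertex cover of size at most `2k - 1`, and a star with `s` edges
contributes at most `(s + 1) ‖x‖²`: weight the two endpoints of each swap by the number of
leaves of the star outside, resp. inside, the `k`-set.
-/

open scoped Matrix

lemma Finset.sum_sum_filter_comm {ι κ R : Type*} [Fintype κ] [AddCommMonoid R] (s : Finset ι)
    (p : ι → κ → Prop) [∀ i j, Decidable (p i j)] (f : κ → R) :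
    ∑ i ∈ s, ∑ j with p i j, f j = ∑ j, #{i ∈ s | p i j} • f j := by
  rw [sum_comm' (t' := univ) (s' := fun j => {i ∈ s | p i j}) (by simp)]
  simp only [sum_const]

lemma Finset.sum_le_card_add_card_mul_of_fiberwise {ι κ : Type*} [DecidableEq κ] {s : Finset ι}
    {t : Finset κ} {g : ι → κ} (hg : ∀ i ∈ s, g i ∈ t) {f : ι → ℝ} {B : ℝ}
    (h : ∀ j ∈ t, ∑ i ∈ s with g i = j, f i ≤ (#{i ∈ s | g i = j} + 1) * B) :
    ∑ i ∈ s, f i ≤ (#s + #t) * B := by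
  rw [← sum_fiberwise_of_maps_to hg, card_eq_sum_card_fiberwise hg]
  calc _ ≤ ∑ j ∈ t, (#{i ∈ s | g i = j} + 1) * B := sum_le_sum h
    _ = _ := by simp [← sum_mul, sum_add_distrib]

theorem Finset.exists_injective_of_card_le_card_biUnion_add {ι α : Type*} [Fintype ι]
    [DecidableEq α] (t : ι → Finset α) (d : ℕ) (h : ∀ s : Finset ι, #s ≤ #(s.biUnion t) + d) :
    ∃ (s : Finset ι) (f : s → α), Function.Injective f ∧ (∀ i : s, f i ∈ t i) ∧
      Fintype.card ι ≤ #s + d := by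
  -- Hall's theorem for the sets `t i` padded with `d` common dummy elements.
  let t' : ι → Finset (α ⊕ Fin d) := fun i => (t i).map .inl ∪ univ.map .inr
  have hall : ∀ s : Finset ι, #s ≤ #(s.biUnion t') := by
    intro s
    rcases s.eq_empty_or_nonempty with rfl | ⟨i, hi⟩
    · simp
    calc #s ≤ #(s.biUnion t) + d := h s
      _ = #((s.biUnion t).map .inl ∪ univ.map .inr) := by
        rw [card_union_of_disjoint (by simp [disjoint_left])]
        simp
      _ ≤ #(s.biUnion t') := card_le_card fun y hy => by
        simp only [t', mem_union, mem_map, mem_biUnion] at hy ⊢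
        grind
  obtain ⟨f, hf, hft⟩ := (all_card_le_biUnion_card_iff_exists_injective t').mp hall
  refine ⟨({i | (f i).isLeft} : Finset ι), fun i => (f i).getLeft (mem_filter.mp i.2).2,
    fun i j hij => ?_, fun i => ?_, ?_⟩
  · have hi := (mem_filter.mp i.2).2
    have hj := (mem_filter.mp j.2).2
    exact Subtype.ext (hf (by
      rw [← Sum.inl_getLeft _ hi, ← Sum.inl_getLeft _ hj]
      exact congrArg Sum.inl hij))
  · have hi := (mem_filter.mp i.2).2
    obtain ⟨a, ha⟩ := Sum.isLeft_iff.mp hi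
    have := hft i
    rw [ha] at this
    simp only [(Sum.getLeft_eq_iff hi).mpr ha]
    simpa [t'] using this
  · have hright : #{i | ¬(f i).isLeft} ≤ d := by
      rw [← card_image_of_injective _ hf]
      refine (card_le_card (t := univ.map Function.Embedding.inr) fun y hy => ?_).trans (by simp)
      obtain ⟨i, hi, rfl⟩ := mem_image.mp hy
      obtain ⟨r, hr⟩ := Sum.isRight_iff.mp (Sum.not_isLeft.mp (mem_filter.mp hi).2)
      simp [hr]
    have := card_filter_add_card_filter_not (s := univ) (p := fun i => (f i).isLeft)
    rw [card_univ] at this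
    omega

theorem Finset.exists_cover_card_le_card_matching {α β : Type*} [Fintype α] [Fintype β]
    [DecidableEq α] [DecidableEq β] (E : Finset (α × β)) :
    ∃ M ⊆ E, Set.InjOn Prod.fst (M : Set (α × β)) ∧ Set.InjOn Prod.snd (M : Set (α × β)) ∧
      ∃ (C₁ : Finset α) (C₂ : Finset β), (∀ e ∈ E, e.1 ∈ C₁ ∨ e.2 ∈ C₂) ∧ #C₁ + #C₂ ≤ #M := by
  let N : α → Finset β := fun a => {b | (a, b) ∈ E}
  -- `S₀` has maximal deficiency `#S - #N(S)`; the cover is `(S₀ᶜ, N(S₀))`.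
  obtain ⟨S₀, -, hS₀⟩ := exists_max_image univ
    (fun S : Finset α => (#S : ℤ) - #(S.biUnion N)) univ_nonempty
  have h₀ := hS₀ ∅ (mem_univ ∅)
  simp only [card_empty, biUnion_empty, Nat.cast_zero, sub_zero] at h₀
  have hdefect : ∀ S, #S ≤ #(S.biUnion N) + (#S₀ - #(S₀.biUnion N)) := fun S => by
    have := hS₀ S (mem_univ S)
    omega
  obtain ⟨s, f, hf, hfN, hcard⟩ := exists_injective_of_card_le_card_biUnion_add N _ hdefect
  have hinj : Function.Injective fun i : s => (i.1, f i) := fun i j h =>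
    Subtype.ext (congrArg Prod.fst h)
  refine ⟨univ.image fun i : s => (i.1, f i), fun e he => ?_, fun e he e' he' h => ?_,
    fun e he e' he' h => ?_, S₀ᶜ, S₀.biUnion N, fun e he => ?_, ?_⟩
  · obtain ⟨i, -, rfl⟩ := mem_image.mp he
    simpa [N] using hfN i
  · obtain ⟨i, -, rfl⟩ := mem_image.mp he
    obtain ⟨j, -, rfl⟩ := mem_image.mp he'
    exact hinj.eq_iff.mpr (Subtype.ext h)
  · obtain ⟨i, -, rfl⟩ := mem_image.mp he
    obtain ⟨j, -, rfl⟩ := mem_image.mp he'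
    exact hinj.eq_iff.mpr (hf h)
  · by_cases h : e.1 ∈ S₀
    · exact Or.inr (mem_biUnion.mpr ⟨e.1, h, by simpa [N] using he⟩)
    · exact Or.inl (mem_compl.mpr h)
  · rw [card_compl, card_image_of_injective _ hinj, card_univ, Fintype.card_coe]
    have := card_le_univ S₀
    omega

lemma card_filter_fst_mem_add_card_filter_snd_mem_le {V : Type*} [DecidableEq V] {A : Set V}
    {M : Finset (V × V)} (hM : ∀ e ∈ M, e.1 ∈ A ∧ e.2 ∉ A)
    (h₁ : Set.InjOn Prod.fst (M : Set (V × V))) (h₂ : Set.InjOn Prod.snd (M : Set (V × V)))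
    (s : Finset V) : #{e ∈ M | e.1 ∈ s} + #{e ∈ M | e.2 ∈ s} ≤ #s := by
  rw [← card_image_of_injOn (h₁.mono (filter_subset _ _)),
    ← card_image_of_injOn (h₂.mono (filter_subset _ _)), ← card_union_of_disjoint]
  · refine card_le_card fun v hv => ?_
    simp only [mem_union, mem_image, mem_filter] at hv
    obtain ⟨e, ⟨-, he⟩, rfl⟩ | ⟨e, ⟨-, he⟩, rfl⟩ := hv <;> exact he
  · simp only [disjoint_left, mem_image, mem_filter]
    rintro _ ⟨e, ⟨he, -⟩, rfl⟩ ⟨e', ⟨he', -⟩, hee'⟩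
    exact (hM e' he').2 (hee' ▸ (hM e he).1)

lemma sq_sub_le_add_mul_div_add_div (u v : ℝ) {α β : ℝ} (hα : 0 < α) (hβ : 0 < β) :
    (u - v) ^ 2 ≤ (α + β) * (u ^ 2 / α + v ^ 2 / β) := by
  have h : (α + β) * (u ^ 2 / α + v ^ 2 / β) - (u - v) ^ 2 = (β * u + α * v) ^ 2 / (α * β) := by
    field_simp
    ring
  nlinarith [div_nonneg (sq_nonneg (β * u + α * v)) (mul_pos hα hβ).le]

lemma mul_div_le_of_nonneg (t : ℝ) {y : ℝ} (hy : 0 ≤ y) : t * (y / t) ≤ y := by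
  rcases eq_or_ne t 0 with rfl | ht
  · simpa using hy
  · rw [mul_div_cancel₀ _ ht]

theorem maxEigenvalue_le_of_forall_dotProduct_mulVec_le {n : Type*} [Fintype n]
    {M : Matrix n n ℝ} {c : ℝ} (hc : 0 ≤ c) (h : ∀ x, x ⬝ᵥ (M *ᵥ x) ≤ c * ∑ i, x i ^ 2) :
    maxEigenvalue M ≤ c := by
  refine Real.sSup_le (fun μ ⟨x, hx, hμ⟩ => ?_) hc
  have hpos : 0 < ∑ i, x i ^ 2 := by
    obtain ⟨i, hi⟩ := Function.ne_iff.mp hx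
    exact sum_pos' (fun i _ => sq_nonneg _) ⟨i, mem_univ i, pow_two_pos_of_ne_zero hi⟩
  have hquad : x ⬝ᵥ (M *ᵥ x) = μ * ∑ i, x i ^ 2 := by
    simp only [hμ, dotProduct, Pi.smul_apply, smul_eq_mul, mul_sum]
    exact sum_congr rfl fun i _ => by ring
  exact le_of_mul_le_mul_right (hquad ▸ h x) hpos

abbrev Tokens (V : Type*) (k : ℕ) := {s : Finset V // s.card = k}

section TokenSwap

variable {V : Type*} [DecidableEq V] {k : ℕ}

def tokenSwap (a b : V) : Equiv.Perm (Tokens V k) :=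
  (Equiv.swap a b).finsetCongr.subtypeEquiv fun s => by simp

lemma mem_tokenSwap {a b w : V} {σ : Tokens V k} :
    w ∈ (tokenSwap a b σ).1 ↔ Equiv.swap a b w ∈ σ.1 := by
  simp [tokenSwap]

@[simp] lemma tokenSwap_tokenSwap (a b : V) (σ : Tokens V k) :
    tokenSwap a b (tokenSwap a b σ) = σ := by
  ext w; simp [mem_tokenSwap]

lemma tokenSwap_comm (a b : V) : (tokenSwap a b : Equiv.Perm (Tokens V k)) = tokenSwap b a := by
  ext σ w; simp [mem_tokenSwap, Equiv.swap_comm]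

lemma card_filter_mem_tokenSwap {c ℓ : V} {F : Finset V} (hc : c ∉ F) (hℓ : ℓ ∈ F)
    {σ : Tokens V k} (hcσ : c ∈ σ.1) (hℓσ : ℓ ∉ σ.1) :
    #{ℓ' ∈ F | ℓ' ∈ (tokenSwap c ℓ σ).1} = #{ℓ' ∈ F | ℓ' ∈ σ.1} + 1 := by
  have : {ℓ' ∈ F | ℓ' ∈ (tokenSwap c ℓ σ).1} = insert ℓ {ℓ' ∈ F | ℓ' ∈ σ.1} := by
    ext w
    simp only [mem_filter, mem_insert, mem_tokenSwap, Equiv.swap_apply_def]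
    grind
  rw [this, card_insert_of_notMem (by simp [hℓσ])]

lemma tokenSwap_val_eq_symmDiff {a b : V} {σ : Tokens V k} (ha : a ∈ σ.1) (hb : b ∉ σ.1) :
    (tokenSwap a b σ).1 = σ.1 ∆ {a, b} := by
  ext w
  simp only [mem_tokenSwap, mem_symmDiff, mem_insert, mem_singleton, Equiv.swap_apply_def]
  grind

lemma mem_iff_notMem_of_symmDiff_eq_pair {u v : V} (huv : u ≠ v) {σ τ : Tokens V k}
    (h : σ.1 ∆ τ.1 = {u, v}) : u ∈ σ.1 ↔ v ∉ σ.1 := by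
  have hsd : #(σ.1 \ τ.1) = #(τ.1 \ σ.1) := card_sdiff_comm (by rw [σ.2, τ.2])
  have h₁ : σ.1 \ τ.1 = {w ∈ ({u, v} : Finset V) | w ∈ σ.1} := by
    ext w; have := congrArg (w ∈ ·) h; simp only [mem_symmDiff] at this; grind
  have h₂ : τ.1 \ σ.1 = {w ∈ ({u, v} : Finset V) | w ∉ σ.1} := by
    ext w; have := congrArg (w ∈ ·) h; simp only [mem_symmDiff] at this; grind
  rw [h₁, h₂] at hsd
  by_cases hu : u ∈ σ.1 <;> by_cases hv : v ∈ σ.1 <;>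
    simp [filter_insert, filter_singleton, hu, hv, huv] at hsd ⊢

theorem tokenGraph_adj_iff (G : SimpleGraph V) {σ τ : Tokens V k} :
    (tokenGraph G k).Adj σ τ ↔ ∃ a b, G.Adj a b ∧ a ∈ σ.1 ∧ b ∉ σ.1 ∧ τ = tokenSwap a b σ := by
  constructor
  · rintro ⟨u, v, huv, h⟩
    have hτ : τ.1 = σ.1 ∆ {u, v} := by rw [← h, symmDiff_symmDiff_cancel_left]
    have hcut := mem_iff_notMem_of_symmDiff_eq_pair huv.ne h
    by_cases hu : u ∈ σ.1
    · refine ⟨u, v, huv, hu, hcut.mp hu, Subtype.ext ?_⟩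
      rw [hτ, tokenSwap_val_eq_symmDiff hu (hcut.mp hu)]
    · have hv : v ∈ σ.1 := not_not.mp (mt hcut.mpr hu)
      refine ⟨v, u, huv.symm, hv, hu, Subtype.ext ?_⟩
      rw [hτ, tokenSwap_val_eq_symmDiff hv hu, pair_comm]
  · rintro ⟨a, b, hab, ha, hb, rfl⟩
    exact ⟨a, b, hab, by rw [tokenSwap_val_eq_symmDiff ha hb, symmDiff_symmDiff_cancel_left]⟩

lemma eq_of_tokenSwap_eq {a b a' b' : V} {σ : Tokens V k} (ha : a ∈ σ.1) (hb : b ∉ σ.1)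
    (ha' : a' ∈ σ.1) (hb' : b' ∉ σ.1) (h : tokenSwap a b σ = tokenSwap a' b' σ) :
    a = a' ∧ b = b' := by
  have hpair : ({a, b} : Finset V) = {a', b'} := by
    have := congrArg Subtype.val h
    rwa [tokenSwap_val_eq_symmDiff ha hb, tokenSwap_val_eq_symmDiff ha' hb',
      symmDiff_right_inj] at this
  have h₁ : a ∈ ({a', b'} : Finset V) := hpair ▸ mem_insert_self a {b}
  have h₂ : b ∈ ({a', b'} : Finset V) := hpair ▸ mem_insert_of_mem (mem_singleton_self b)
  simp only [mem_insert, mem_singleton] at h₁ h₂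
  refine ⟨h₁.resolve_right ?_, h₂.resolve_left ?_⟩ <;> rintro rfl <;> contradiction

end TokenSwap

section Energy

variable {V : Type*} [Fintype V] [DecidableEq V] {k : ℕ}

def swapEnergy (a b : V) (x : Tokens V k → ℝ) : ℝ :=
  ∑ σ with a ∈ σ.1 ∧ b ∉ σ.1, (x σ - x (tokenSwap a b σ)) ^ 2

lemma sum_cut_tokenSwap {M : Type*} [AddCommMonoid M] (a b : V) (f : Tokens V k → M) :
    ∑ σ with a ∈ σ.1 ∧ b ∉ σ.1, f (tokenSwap a b σ) = ∑ τ with b ∈ τ.1 ∧ a ∉ τ.1, f τ :=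
  sum_equiv (tokenSwap a b) (fun σ => by simp [mem_tokenSwap]) (fun _ _ => rfl)

lemma swapEnergy_comm (a b : V) (x : Tokens V k → ℝ) : swapEnergy a b x = swapEnergy b a x := by
  rw [swapEnergy, swapEnergy, ← sum_cut_tokenSwap a b]
  refine sum_congr rfl fun σ _ => ?_
  rw [← tokenSwap_comm, tokenSwap_tokenSwap]
  ring

lemma swapEnergy_le (a b : V) (x : Tokens V k → ℝ) :
    swapEnergy a b x ≤ 2 * ((∑ σ with a ∈ σ.1, x σ ^ 2) + ∑ σ with b ∈ σ.1, x σ ^ 2) := by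
  have hsq : ∀ u v : ℝ, (u - v) ^ 2 ≤ 2 * u ^ 2 + 2 * v ^ 2 := fun u v => by
    nlinarith [sq_nonneg (u + v)]
  calc swapEnergy a b x
      ≤ ∑ σ with a ∈ σ.1 ∧ b ∉ σ.1, (2 * x σ ^ 2 + 2 * x (tokenSwap a b σ) ^ 2) :=
        sum_le_sum fun σ _ => hsq _ _
    _ = 2 * ((∑ σ with a ∈ σ.1 ∧ b ∉ σ.1, x σ ^ 2) + ∑ σ with b ∈ σ.1 ∧ a ∉ σ.1, x σ ^ 2) := by
        rw [sum_add_distrib, ← mul_sum, ← mul_sum,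
          sum_cut_tokenSwap a b (fun τ => x τ ^ 2), mul_add]
    _ ≤ _ := by gcongr <;> exact And.left

theorem sum_swapEnergy_le_of_matching {A : Set V} {M : Finset (V × V)}
    (hM : ∀ e ∈ M, e.1 ∈ A ∧ e.2 ∉ A) (h₁ : Set.InjOn Prod.fst (M : Set (V × V)))
    (h₂ : Set.InjOn Prod.snd (M : Set (V × V))) (x : Tokens V k → ℝ) :
    ∑ e ∈ M, swapEnergy e.1 e.2 x ≤ 2 * k * ∑ σ, x σ ^ 2 := by
  calc ∑ e ∈ M, swapEnergy e.1 e.2 x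
      ≤ ∑ e ∈ M, 2 * ((∑ σ with e.1 ∈ σ.1, x σ ^ 2) + ∑ σ with e.2 ∈ σ.1, x σ ^ 2) :=
        sum_le_sum fun e _ => swapEnergy_le _ _ x
    _ = 2 * ∑ σ, ((#{e ∈ M | e.1 ∈ σ.1} + #{e ∈ M | e.2 ∈ σ.1} : ℕ) : ℝ) * x σ ^ 2 := by
        simp only [← mul_sum, sum_add_distrib, sum_sum_filter_comm, nsmul_eq_mul, Nat.cast_add,
          add_mul]
    _ ≤ 2 * ∑ σ, (k : ℝ) * x σ ^ 2 := by
        gcongr with σ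
        exact_mod_cast (card_filter_fst_mem_add_card_filter_snd_mem_le hM h₁ h₂ σ.1).trans σ.2.le
    _ = 2 * k * ∑ σ, x σ ^ 2 := by rw [← mul_sum, mul_assoc]

theorem sum_swapEnergy_star_le {c : V} {F : Finset V} (hc : c ∉ F) (x : Tokens V k → ℝ) :
    ∑ ℓ ∈ F, swapEnergy c ℓ x ≤ (#F + 1) * ∑ σ, x σ ^ 2 := by
  -- `p σ` counts the leaves in `σ`; swapping `c` for a leaf `ℓ ∉ σ` raises it by one, so the
  -- weights `#F - p σ` and `p σ + 1` put on the two endpoints add up to `#F + 1`.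
  let p : Tokens V k → ℕ := fun σ => #{ℓ ∈ F | ℓ ∈ σ.1}
  have hterm : ∀ ℓ ∈ F, swapEnergy c ℓ x ≤ (#F + 1) *
      ((∑ σ with c ∈ σ.1 ∧ ℓ ∉ σ.1, x σ ^ 2 / (#F - p σ)) +
        ∑ σ with ℓ ∈ σ.1 ∧ c ∉ σ.1, x σ ^ 2 / p σ) := by
    intro ℓ hℓ
    rw [← sum_cut_tokenSwap c ℓ, ← sum_add_distrib, mul_sum]
    refine sum_le_sum fun σ hσ => ?_
    obtain ⟨hcσ, hℓσ⟩ := (mem_filter.mp hσ).2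
    have hlt : (p σ : ℝ) < #F := by
      exact_mod_cast card_lt_card (filter_ssubset.mpr ⟨ℓ, hℓ, hℓσ⟩)
    have hβ : (p (tokenSwap c ℓ σ) : ℝ) = p σ + 1 := by
      exact_mod_cast card_filter_mem_tokenSwap hc hℓ hcσ hℓσ
    have h := sq_sub_le_add_mul_div_add_div (x σ) (x (tokenSwap c ℓ σ))
      (sub_pos.mpr hlt) (hβ ▸ Nat.cast_add_one_pos (p σ))
    rwa [hβ, show (#F - p σ : ℝ) + (p σ + 1) = #F + 1 by ring, ← hβ] at h
  have hcount : ∀ σ : Tokens V k,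
      (#{ℓ ∈ F | c ∈ σ.1 ∧ ℓ ∉ σ.1} : ℝ) * (x σ ^ 2 / (#F - p σ)) +
        #{ℓ ∈ F | ℓ ∈ σ.1 ∧ c ∉ σ.1} * (x σ ^ 2 / p σ) ≤ x σ ^ 2 := by
    intro σ
    by_cases hcσ : c ∈ σ.1
    · have : (#{ℓ ∈ F | ℓ ∉ σ.1} : ℝ) = #F - p σ := by
        rw [← card_filter_add_card_filter_not (s := F) (p := fun ℓ => ℓ ∈ σ.1)]
        push_cast
        ring
      simpa [hcσ, this] using mul_div_le_of_nonneg _ (sq_nonneg (x σ))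
    · simpa [hcσ] using mul_div_le_of_nonneg _ (sq_nonneg (x σ))
  calc ∑ ℓ ∈ F, swapEnergy c ℓ x
      ≤ ∑ ℓ ∈ F, (#F + 1) * ((∑ σ with c ∈ σ.1 ∧ ℓ ∉ σ.1, x σ ^ 2 / (#F - p σ)) +
          ∑ σ with ℓ ∈ σ.1 ∧ c ∉ σ.1, x σ ^ 2 / p σ) := sum_le_sum hterm
    _ = (#F + 1) * ∑ σ : Tokens V k, ((#{ℓ ∈ F | c ∈ σ.1 ∧ ℓ ∉ σ.1} : ℝ) *
          (x σ ^ 2 / (#F - p σ)) + #{ℓ ∈ F | ℓ ∈ σ.1 ∧ c ∉ σ.1} * (x σ ^ 2 / p σ)) := by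
        simp only [← mul_sum, sum_add_distrib, sum_sum_filter_comm, nsmul_eq_mul]
    _ ≤ (#F + 1) * ∑ σ, x σ ^ 2 := by gcongr with σ; exact hcount σ

lemma sum_swapEnergy_star_le_of_injOn {ι : Type*} {S : Finset ι} {ℓ : ι → V}
    (hℓ : Set.InjOn ℓ S) {c : V} (hc : ∀ i ∈ S, ℓ i ≠ c) (x : Tokens V k → ℝ) :
    ∑ i ∈ S, swapEnergy c (ℓ i) x ≤ (#S + 1) * ∑ σ, x σ ^ 2 := by
  rw [← sum_image (f := fun v => swapEnergy c v x) hℓ, ← card_image_of_injOn hℓ]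
  exact sum_swapEnergy_star_le (by simpa using hc) x

theorem sum_swapEnergy_le_of_cover {A : Set V} {E : Finset (V × V)}
    (hE : ∀ e ∈ E, e.1 ∈ A ∧ e.2 ∉ A) {C₁ C₂ : Finset V} (hC : ∀ e ∈ E, e.1 ∈ C₁ ∨ e.2 ∈ C₂)
    (x : Tokens V k → ℝ) :
    ∑ e ∈ E, swapEnergy e.1 e.2 x ≤ (#E + #C₁ + #C₂) * ∑ σ, x σ ^ 2 := by
  have hne : ∀ e ∈ E, e.1 ≠ e.2 := fun e he h => (hE e he).2 (h ▸ (hE e he).1)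
  have h₁ : ∑ e ∈ E with e.1 ∈ C₁, swapEnergy e.1 e.2 x ≤
      (#{e ∈ E | e.1 ∈ C₁} + #C₁) * ∑ σ, x σ ^ 2 := by
    refine sum_le_card_add_card_mul_of_fiberwise (fun e he => (mem_filter.mp he).2) fun c _ => ?_
    have hfib : ∀ e ∈ {e ∈ {e ∈ E | e.1 ∈ C₁} | e.1 = c}, e ∈ E ∧ e.1 = c := fun e he => by
      simp only [mem_filter] at he; exact ⟨he.1.1, he.2⟩
    rw [sum_congr rfl fun e he => by rw [(hfib e he).2]]
    refine sum_swapEnergy_star_le_of_injOn (fun e he e' he' h => ?_)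
      (fun e he => (hfib e he).2 ▸ (hne e (hfib e he).1).symm) x
    exact Prod.ext ((hfib e he).2.trans (hfib e' he').2.symm) h
  have h₂ : ∑ e ∈ E with e.1 ∉ C₁, swapEnergy e.1 e.2 x ≤
      (#{e ∈ E | e.1 ∉ C₁} + #C₂) * ∑ σ, x σ ^ 2 := by
    refine sum_le_card_add_card_mul_of_fiberwise (g := Prod.snd)
      (fun e he => (hC e (mem_filter.mp he).1).resolve_left (mem_filter.mp he).2) fun c _ => ?_
    have hfib : ∀ e ∈ {e ∈ {e ∈ E | e.1 ∉ C₁} | e.2 = c}, e ∈ E ∧ e.2 = c := fun e he => by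
      simp only [mem_filter] at he; exact ⟨he.1.1, he.2⟩
    rw [sum_congr rfl fun e he => by rw [swapEnergy_comm, (hfib e he).2]]
    refine sum_swapEnergy_star_le_of_injOn (fun e he e' he' h => ?_)
      (fun e he => (hfib e he).2 ▸ hne e (hfib e he).1) x
    exact Prod.ext h ((hfib e he).2.trans (hfib e' he').2.symm)
  rw [← sum_filter_add_sum_filter_not E (fun e => e.1 ∈ C₁),
    ← card_filter_add_card_filter_not (s := E) (p := fun e => e.1 ∈ C₁)]
  push_cast
  linarith

theorem sum_swapEnergy_le {A : Set V} (hk : 1 ≤ k) (E : Finset (V × V))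
    (hE : ∀ e ∈ E, e.1 ∈ A ∧ e.2 ∉ A) (x : Tokens V k → ℝ) :
    ∑ e ∈ E, swapEnergy e.1 e.2 x ≤ (#E + 2 * k - 1) * ∑ σ, x σ ^ 2 := by
  induction E using Finset.strongInduction with
  | H E ih =>
  by_cases hM : ∃ M ⊆ E, Set.InjOn Prod.fst (M : Set (V × V)) ∧
      Set.InjOn Prod.snd (M : Set (V × V)) ∧ #M = 2 * k
  · obtain ⟨M, hME, h₁, h₂, hMcard⟩ := hM
    have hrest := ih (E \ M) (sdiff_ssubset hME (card_pos.mp (by omega)))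
      fun e he => hE e (mem_sdiff.mp he).1
    have hmatch := sum_swapEnergy_le_of_matching (fun e he => hE e (hME he)) h₁ h₂ x
    rw [card_sdiff_of_subset hME, Nat.cast_sub (card_le_card hME), hMcard] at hrest
    push_cast at hrest
    rw [← sum_sdiff hME]
    linarith
  · obtain ⟨M, hME, h₁, h₂, C₁, C₂, hC, hCM⟩ := exists_cover_card_le_card_matching E
    have hMk : #M < 2 * k := by
      by_contra! h
      obtain ⟨M', hM'M, hM'card⟩ := exists_subset_card_eq h
      exact hM ⟨M', hM'M.trans hME, h₁.mono hM'M, h₂.mono hM'M, hM'card⟩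
    have hC' : (#C₁ + #C₂ : ℝ) ≤ 2 * k - 1 := by
      have : #C₁ + #C₂ + 1 ≤ 2 * k := by omega
      have : (#C₁ + #C₂ + 1 : ℝ) ≤ 2 * k := by exact_mod_cast this
      linarith
    calc ∑ e ∈ E, swapEnergy e.1 e.2 x ≤ (#E + #C₁ + #C₂) * ∑ σ, x σ ^ 2 :=
          sum_swapEnergy_le_of_cover hE hC x
      _ ≤ (#E + 2 * k - 1) * ∑ σ, x σ ^ 2 := by
          rw [add_assoc, add_sub_assoc]
          gcongr

theorem sum_adj_sq_sub_eq_sum_swapEnergy (G : SimpleGraph V) [DecidableRel G.Adj]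
    (x : Tokens V k → ℝ) :
    ∑ σ, ∑ τ, (if (tokenGraph G k).Adj σ τ then (x σ - x τ) ^ 2 else 0) =
      ∑ p : V × V with G.Adj p.1 p.2, swapEnergy p.1 p.2 x := by
  simp only [swapEnergy]
  rw [sum_comm' (t' := univ)
    (s' := fun σ => {p : V × V | G.Adj p.1 p.2 ∧ p.1 ∈ σ.1 ∧ p.2 ∉ σ.1}) (by simp)]
  refine sum_congr rfl fun σ _ => ?_
  rw [← sum_filter]
  refine (sum_bij (fun p _ => tokenSwap p.1 p.2 σ) (fun p hp => ?_) (fun p hp q hq h => ?_)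
    (fun τ hτ => ?_) (fun _ _ => rfl)).symm
  · obtain ⟨hadj, h₁, h₂⟩ := (mem_filter.mp hp).2
    exact mem_filter.mpr ⟨mem_univ _, (tokenGraph_adj_iff G).mpr ⟨p.1, p.2, hadj, h₁, h₂, rfl⟩⟩
  · obtain ⟨-, hp₁, hp₂⟩ := (mem_filter.mp hp).2
    obtain ⟨-, hq₁, hq₂⟩ := (mem_filter.mp hq).2
    obtain ⟨h₁, h₂⟩ := eq_of_tokenSwap_eq hp₁ hp₂ hq₁ hq₂ h
    exact Prod.ext h₁ h₂
  · obtain ⟨a, b, hab, ha, hb, rfl⟩ := (tokenGraph_adj_iff G).mp (mem_filter.mp hτ).2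
    exact ⟨(a, b), mem_filter.mpr ⟨mem_univ _, hab, ha, hb⟩, rfl⟩

end Energy

section Bipartite

variable {V : Type*} [Fintype V] {G : SimpleGraph V} [DecidableRel G.Adj] {A : Set V}
  [DecidablePred (· ∈ A)]

lemma sum_adj_eq_two_nsmul_sum_adj_fst_mem {M : Type*} [AddCommMonoid M]
    (hA : ∀ u v, G.Adj u v → (u ∈ A ↔ v ∉ A)) (f : V → V → M) (hf : ∀ u v, f u v = f v u) :
    ∑ p : V × V with G.Adj p.1 p.2, f p.1 p.2 =
      2 • ∑ p : V × V with G.Adj p.1 p.2 ∧ p.1 ∈ A, f p.1 p.2 := by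
  rw [← sum_filter_add_sum_filter_not _ (fun p => p.1 ∈ A), filter_filter, filter_filter,
    two_nsmul]
  congr 1
  refine sum_equiv (Equiv.prodComm V V) (fun p => ?_) (fun p _ => hf p.1 p.2)
  simp only [mem_filter, mem_univ, true_and, Equiv.prodComm_apply, Prod.fst_swap, Prod.snd_swap]
  exact ⟨fun h => ⟨h.1.symm, not_not.mp (mt (hA _ _ h.1).mpr h.2)⟩,
    fun h => ⟨h.1.symm, fun h' => (hA _ _ h.1.symm).mp h' h.2⟩⟩

lemma card_filter_adj_fst_mem (hA : ∀ u v, G.Adj u v → (u ∈ A ↔ v ∉ A)) :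
    #{p : V × V | G.Adj p.1 p.2 ∧ p.1 ∈ A} = #G.edgeFinset := by
  have h := sum_adj_eq_two_nsmul_sum_adj_fst_mem hA (fun _ _ => 1) fun _ _ => rfl
  simp only [sum_const, smul_eq_mul, mul_one] at h
  have hdeg : #{p : V × V | G.Adj p.1 p.2} = ∑ v, G.degree v := by
    rw [card_filter, Fintype.sum_prod_type]
    simp [← G.neighborFinset_eq_filter]
  rw [hdeg, G.sum_degrees_eq_twice_card_edges] at h
  omega

end Bipartite

theorem dotProduct_lapMatrix_tokenGraph_le {V : Type*} [Fintype V] [DecidableEq V] {k : ℕ}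
    (G : SimpleGraph V) [DecidableRel G.Adj]
    (hbip : ∃ A : Set V, ∀ u v, G.Adj u v → (u ∈ A ↔ v ∉ A)) (hk : 1 ≤ k)
    (x : Tokens V k → ℝ) :
    x ⬝ᵥ ((tokenGraph G k).lapMatrix ℝ *ᵥ x) ≤
      (#G.edgeFinset + 2 * k - 1) * ∑ σ, x σ ^ 2 := by
  classical
  obtain ⟨A, hA⟩ := hbip
  rw [← Matrix.toLinearMap₂'_apply', SimpleGraph.lapMatrix_toLinearMap₂',
    sum_adj_sq_sub_eq_sum_swapEnergy,
    sum_adj_eq_two_nsmul_sum_adj_fst_mem hA _ fun a b => swapEnergy_comm a b x,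
    ← card_filter_adj_fst_mem hA, nsmul_eq_mul, Nat.cast_ofNat,
    mul_div_cancel_left₀ _ two_ne_zero]
  refine sum_swapEnergy_le (A := A) hk _ (fun e he => ?_) x
  obtain ⟨hadj, he₁⟩ := (mem_filter.mp he).2
  exact ⟨he₁, (hA _ _ hadj).mp he₁⟩

theorem stmt_5_general {V : Type*} [Fintype V] [DecidableEq V] (G : SimpleGraph V)
    [DecidableRel G.Adj]
    (hbip : ∃ A : Set V, ∀ u v : V, G.Adj u v → (u ∈ A ↔ v ∉ A))
    (k : ℕ) (hk1 : 1 ≤ k) :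
    maxEigenvalue ((tokenGraph G k).lapMatrix ℝ) ≤
      (G.edgeFinset.card : ℝ) + 2 * (k : ℝ) - 1 := by
  have hk : (1 : ℝ) ≤ k := by exact_mod_cast hk1
  have hE : (0 : ℝ) ≤ #G.edgeFinset := Nat.cast_nonneg _
  exact maxEigenvalue_le_of_forall_dotProduct_mulVec_le (by linarith)
    (dotProduct_lapMatrix_tokenGraph_le G hbip hk1)

theorem stmt_5 {V : Type*} [Fintype V] [DecidableEq V] (G : SimpleGraph V)
    [DecidableRel G.Adj]
    (hbip : ∃ A : Set V, ∀ u v : V, G.Adj u v → (u ∈ A ↔ v ∉ A))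
    (k : ℕ) (hk1 : 1 ≤ k) (hk2 : 2 * k ≤ Fintype.card V) :
    maxEigenvalue ((tokenGraph G k).lapMatrix ℝ) ≤
      (G.edgeFinset.card : ℝ) + 2 * (k : ℝ) - 1 :=
  stmt_5_general G hbip k hk1
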